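/- arXiv:2110.15603 — 4 statements merged into one kernel-verified Lean document; each statement's English description precedes it below -/
import Mathlib

section
/- Under the abstract setting: let (u, p, φ, r, y) solve the continuous optimality system and (u_h, p_h, φ_h, r_h, y_h) the discrete one, and let (P_h u, R_h p), (P̄_h φ, R̄_h r) be the elliptic projections. Then for all z_h ∈ X_h and w_h ∈ M_h: a_h(P_h u − u_h, z_h) + b_h(z_h, R_h p − p_h) = ⟨y − y_h, E_h z_h⟩_Q, b_h(P_h u − u_h, w_h) = 0, a_h(z_h, P̄_h φ − φ_h) + b_h(z_h, r_h − R̄_h r) = ⟨u − u_h, z_h⟩_W, and b_h(P̄_h φ − φ_h, w_h) = 0. Consequently ⟨y − y_h, E_h(P̄_h φ − φ_h)⟩_Q = ⟨u − u_h, P_h u − u_h⟩_W. -/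
open RealInnerProductSpace

/-!
Subtracting the discrete optimality system from the elliptic-projection system gives error
equations of saddle-point type whose right-hand sides are the data misfits. For two such systems,
with primal errors `e`, `d` in the kernel of `b`, testing the first with `d` and the second with
`e` kills the `b`-terms, so both right-hand sides equal `a e d`.
-/

section SaddlePoint

variable {R X M : Type*} [CommRing R] [AddCommGroup X] [Module R X] [AddCommGroup M] [Module R M]
  (a : X →ₗ[R] X →ₗ[R] R) (b : X →ₗ[R] M →ₗ[R] R)

theorem saddle_sub_eq {x x' : X} {p p' : M} {F F' : X → R}
    (h : ∀ z, a x z + b z p = F z) (h' : ∀ z, a x' z + b z p' = F' z) (z : X) :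
    a (x - x') z + b z (p - p') = F z - F' z := by
  rw [← h z, ← h' z, map_sub, map_sub, LinearMap.sub_apply]
  ring

theorem adjoint_saddle_sub_eq {φ φ' : X} {r r' : M} {G G' : X → R}
    (h : ∀ z, a z φ - b z r = G z) (h' : ∀ z, a z φ' - b z r' = G' z) (z : X) :
    a z (φ - φ') + b z (r' - r) = G z - G' z := by
  rw [← h z, ← h' z, map_sub, map_sub]
  ring

theorem apply_sub_eq_zero {x x' : X} (h : ∀ w, b x w = 0) (h' : ∀ w, b x' w = 0) (w : M) :
    b (x - x') w = 0 := by
  rw [map_sub, LinearMap.sub_apply, h, h', sub_zero]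

theorem saddle_duality {e d : X} {ε δ : M} {F G : X → R}
    (he : ∀ z, a e z + b z ε = F z) (he_ker : ∀ w, b e w = 0)
    (hd : ∀ z, a z d + b z δ = G z) (hd_ker : ∀ w, b d w = 0) :
    F d = G e := by
  rw [← he d, ← hd e, hd_ker, he_ker]

end SaddlePoint

/-- Error equations (2.9)–(2.12) and the resulting duality identity:
subtracting the discrete optimality system from the elliptic-projection system. -/
theorem stmt8 {Xh Mh W Q : Type*}
    [AddCommGroup Xh] [Module ℝ Xh] [AddCommGroup Mh] [Module ℝ Mh]
    [NormedAddCommGroup W] [InnerProductSpace ℝ W]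
    [NormedAddCommGroup Q] [InnerProductSpace ℝ Q]
    (ah : Xh →ₗ[ℝ] Xh →ₗ[ℝ] ℝ) (bh : Xh →ₗ[ℝ] Mh →ₗ[ℝ] ℝ)
    (Eh : Xh →ₗ[ℝ] Q) (ι : Xh →ₗ[ℝ] W)
    (uh φh Phu Pφ : Xh) (ph rh Rp Rr : Mh)
    (f ud uW : W) (y yh : Q)
    -- elliptic projection system (2.6)
    (hp1 : ∀ zh : Xh, ah Phu zh + bh zh Rp = ⟪y, Eh zh⟫ + ⟪f, ι zh⟫)
    (hp2 : ∀ wh : Mh, bh Phu wh = 0)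
    (hp3 : ∀ zh : Xh, ah zh Pφ - bh zh Rr = ⟪uW - ud, ι zh⟫)
    (hp4 : ∀ wh : Mh, bh Pφ wh = 0)
    -- discrete optimality system (2.5)
    (hd1 : ∀ zh : Xh, ah uh zh + bh zh ph = ⟪yh, Eh zh⟫ + ⟪f, ι zh⟫)
    (hd2 : ∀ wh : Mh, bh uh wh = 0)
    (hd3 : ∀ zh : Xh, ah zh φh - bh zh rh = ⟪ι uh - ud, ι zh⟫)
    (hd4 : ∀ wh : Mh, bh φh wh = 0) :
    (∀ zh : Xh, ah (Phu - uh) zh + bh zh (Rp - ph) = ⟪y - yh, Eh zh⟫) ∧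
    (∀ wh : Mh, bh (Phu - uh) wh = 0) ∧
    (∀ zh : Xh, ah zh (Pφ - φh) + bh zh (rh - Rr) = ⟪uW - ι uh, ι zh⟫) ∧
    (∀ wh : Mh, bh (Pφ - φh) wh = 0) ∧
    ⟪y - yh, Eh (Pφ - φh)⟫ = ⟪uW - ι uh, ι (Phu - uh)⟫ := by
  have primal_err : ∀ zh, ah (Phu - uh) zh + bh zh (Rp - ph) = ⟪y - yh, Eh zh⟫ := fun zh =>
    (saddle_sub_eq ah bh hp1 hd1 zh).trans (by rw [inner_sub_left]; ring)
  have primal_ker := apply_sub_eq_zero bh hp2 hd2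
  have adjoint_err : ∀ zh, ah zh (Pφ - φh) + bh zh (rh - Rr) = ⟪uW - ι uh, ι zh⟫ := fun zh =>
    (adjoint_saddle_sub_eq ah bh hp3 hd3 zh).trans (by rw [← inner_sub_left, sub_sub_sub_cancel_right])
  have adjoint_ker := apply_sub_eq_zero bh hp4 hd4
  exact ⟨primal_err, primal_ker, adjoint_err, adjoint_ker,
    saddle_duality ah bh primal_err primal_ker adjoint_err adjoint_ker⟩
end

section
/- In the a posteriori reconstruction setting: let Rφ̄ (written R̄φ) and Ru be the reconstructions solving the continuous systems with discrete data y_h and u_h. Then for every x_h ∈ Q_ad^h: ⟨E_h(R̄φ − φ), y − y_h⟩_Q ≥ −⟨E_h(φ_h − R̄φ), y − y_h⟩_Q + ⟨E_h φ_h + λ y_h, y − x_h⟩_Q + λ‖y − y_h‖_Q². -/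
open RealInnerProductSpace

/- Testing the continuous inequality with `x = y_h` and the discrete one with `x_h`, and adding
the two, the terms in `λ` combine to `λ‖y - y_h‖²`; the reconstruction `R̄φ` only enters through
`E_h(R̄φ - φ) + E_h(φ_h - R̄φ) = E_h φ_h - E_h φ`. -/

theorem le_inner_sub_of_variationalInequalities {Q : Type*} [NormedAddCommGroup Q]
    [InnerProductSpace ℝ Q] (lam : ℝ) (g gh y yh xh : Q)
    (hVI : 0 ≤ ⟪g + lam • y, yh - y⟫) (hVIh : 0 ≤ ⟪gh + lam • yh, xh - yh⟫) :
    ⟪gh + lam • yh, y - xh⟫ + lam * ‖y - yh‖ ^ 2 ≤ ⟪gh - g, y - yh⟫ := by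
  have sum_eq : ⟪g + lam • y, yh - y⟫ + ⟪gh + lam • yh, xh - yh⟫
      = ⟪gh - g, y - yh⟫ - (⟪gh + lam • yh, y - xh⟫ + lam * ‖y - yh‖ ^ 2) := by
    rw [← real_inner_self_eq_norm_sq]
    simp only [inner_sub_left, inner_add_left, inner_sub_right, real_inner_smul_left,
      real_inner_comm yh y]
    ring
  linarith

theorem stmt12_general {V Q : Type*} [AddCommGroup V] [Module ℝ V]
    [NormedAddCommGroup Q] [InnerProductSpace ℝ Q]
    (Eh : V →ₗ[ℝ] Q) (lam : ℝ)
    (Qad Qadh : Set Q) (hsub : Qadh ⊆ Qad)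
    (φ φh Rφ : V) (y yh : Q) (hyh : yh ∈ Qadh)
    (hVI : ∀ x ∈ Qad, 0 ≤ ⟪Eh φ + lam • y, x - y⟫)
    (hVIh : ∀ xh ∈ Qadh, 0 ≤ ⟪Eh φh + lam • yh, xh - yh⟫) :
    ∀ xh ∈ Qadh,
      -⟪Eh (φh - Rφ), y - yh⟫ + ⟪Eh φh + lam • yh, y - xh⟫
          + lam * ‖y - yh‖ ^ 2
        ≤ ⟪Eh (Rφ - φ), y - yh⟫ := by
  intro xh hxh
  have estimate := le_inner_sub_of_variationalInequalities lam (Eh φ) (Eh φh) y yh xh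
    (hVI yh (hsub hyh)) (hVIh xh hxh)
  have telescope :
      ⟪Eh (Rφ - φ), y - yh⟫ + ⟪Eh (φh - Rφ), y - yh⟫ = ⟪Eh φh - Eh φ, y - yh⟫ := by
    rw [← inner_add_left, ← map_add, ← map_sub, sub_add_sub_cancel']
  linarith

/-- Lemma 2.5: variational-inequality estimate with the adjoint reconstruction. -/
theorem stmt12 {V Q : Type*} [AddCommGroup V] [Module ℝ V]
    [NormedAddCommGroup Q] [InnerProductSpace ℝ Q]
    (Eh : V →ₗ[ℝ] Q) (lam : ℝ) (hlam : 0 < lam)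
    (Qad Qadh : Set Q) (hsub : Qadh ⊆ Qad)
    (hQad : Convex ℝ Qad) (hQadcl : IsClosed Qad)
    (φ φh Rφ : V) (y yh : Q) (hy : y ∈ Qad) (hyh : yh ∈ Qadh)
    (hVI : ∀ x ∈ Qad, 0 ≤ ⟪Eh φ + lam • y, x - y⟫)
    (hVIh : ∀ xh ∈ Qadh, 0 ≤ ⟪Eh φh + lam • yh, xh - yh⟫) :
    ∀ xh ∈ Qadh,
      -⟪Eh (φh - Rφ), y - yh⟫ + ⟪Eh φh + lam • yh, y - xh⟫
          + lam * ‖y - yh‖ ^ 2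
        ≤ ⟪Eh (Rφ - φ), y - yh⟫ :=
  stmt12_general Eh lam Qad Qadh hsub φ φh Rφ y yh hyh hVI hVIh
end

section
/- In the a posteriori setting: ‖u − u_h‖_h ≤ C(‖Ru − u_h‖_h + ‖E_h φ_h − Π_h(E_h φ_h)‖_Q + ‖φ_h − R̄φ‖_h) and ‖φ − φ_h‖_h ≤ C(‖φ_h − R̄φ‖_h + ‖Ru − u_h‖_h + ‖E_h φ_h − Π_h(E_h φ_h)‖_Q). -/
open RealInnerProductSpace

/-! Testing each error equation with the error `u - Ru` (resp. `φ - Rφ`) itself kills the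
`b`-term, because that error is discretely divergence free; ellipticity then bounds
`α ‖u - Ru‖` by `‖y - y_h‖` and `α ‖φ - Rφ‖` by `C₀² ‖u - u_h‖`. Theorem 2.6 bounds `‖y - y_h‖`
by the estimator, and the triangle inequality through `Ru` and `Rφ` finishes. -/

theorem mul_le_of_mul_sq_le_mul {α x K : ℝ} (hx : 0 ≤ x) (hK : 0 ≤ K)
    (h : α * x ^ 2 ≤ K * x) : α * x ≤ K := by
  rcases hx.eq_or_lt with rfl | hpos
  · simpa using hK
  · exact le_of_mul_le_mul_right (by nlinarith) hpos

theorem mul_norm_le_of_elliptic {V M : Type*} [NormedAddCommGroup V] [NormedSpace ℝ V]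
    [AddCommGroup M] [Module ℝ M] {Xs : Submodule ℝ V}
    {a : V →ₗ[ℝ] V →ₗ[ℝ] ℝ} {b : V →ₗ[ℝ] M →ₗ[ℝ] ℝ} {α K : ℝ}
    (hell : ∀ v ∈ Xs, (∀ w : M, b v w = 0) → α * ‖v‖ ^ 2 ≤ a v v)
    {v : V} (hv : v ∈ Xs) (hbv : ∀ w : M, b v w = 0) (hK : 0 ≤ K) (q : M)
    (ha : a v v + b v q ≤ K * ‖v‖) : α * ‖v‖ ≤ K := by
  rw [hbv, add_zero] at ha
  exact mul_le_of_mul_sq_le_mul (norm_nonneg v) hK ((hell v hv hbv).trans ha)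

theorem exists_pos_le_mul_of_coupled_bounds {α Cy C0 x ξ e f A P B : ℝ}
    (hα : 0 < α) (hCy : 0 < Cy) (hA : 0 ≤ A) (hP : 0 ≤ P) (hB : 0 ≤ B)
    (hx : x ≤ e + A) (he : α * e ≤ Cy * (A + P + B))
    (hξ : ξ ≤ f + B) (hf : α * f ≤ C0 ^ 2 * x) :
    ∃ C > 0, x ≤ C * (A + P + B) ∧ ξ ≤ C * (A + P + B) := by
  set S := A + P + B
  have hS : 0 ≤ S := by positivity
  have hαx : α * x ≤ (Cy + α) * S := by nlinarith
  have hα2x : α ^ 2 * x ≤ (C0 ^ 2 + α) * (Cy + α) * S :=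
    calc α ^ 2 * x = α * (α * x) := by ring
      _ ≤ α * ((Cy + α) * S) := by gcongr
      _ ≤ (C0 ^ 2 + α) * ((Cy + α) * S) := by
          gcongr
          exact le_add_of_nonneg_left (sq_nonneg C0)
      _ = (C0 ^ 2 + α) * (Cy + α) * S := by ring
  have hα2ξ : α ^ 2 * ξ ≤ (C0 ^ 2 + α) * (Cy + α) * S :=
    calc α ^ 2 * ξ ≤ α * (α * f) + α ^ 2 * B := by nlinarith
      _ ≤ C0 ^ 2 * (α * x) + α * (α * S) := by nlinarith
      _ ≤ C0 ^ 2 * ((Cy + α) * S) + α * ((Cy + α) * S) := by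
          gcongr
          linarith
      _ = (C0 ^ 2 + α) * (Cy + α) * S := by ring
  refine ⟨(C0 ^ 2 + α) * (Cy + α) / α ^ 2, by positivity, ?_, ?_⟩
  all_goals rw [div_mul_eq_mul_div, le_div_iff₀ (by positivity)]
  all_goals linarith

theorem stmt14_general {V M W Q : Type*}
    [NormedAddCommGroup V] [NormedSpace ℝ V]
    [AddCommGroup M] [Module ℝ M]
    [NormedAddCommGroup W] [InnerProductSpace ℝ W]
    [NormedAddCommGroup Q] [InnerProductSpace ℝ Q]
    (Xs : Submodule ℝ V)
    (a : V →ₗ[ℝ] V →ₗ[ℝ] ℝ) (b : V →ₗ[ℝ] M →ₗ[ℝ] ℝ)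
    (E : V →ₗ[ℝ] Q) (ιW : V →ₗ[ℝ] W)
    (Qh : Submodule ℝ Q) [Submodule.HasOrthogonalProjection Qh]
    (alpha C0 Cy : ℝ)
    (halpha : 0 < alpha) (hCy : 0 < Cy)
    (u Ru φ Rφ uh φh : V) (p R0p r R0r : M) (y yh : Q)
    (hu : u ∈ Xs) (hRu : Ru ∈ Xs) (hφ : φ ∈ Xs) (hRφ : Rφ ∈ Xs)
    -- Assumption I
    (hI : ∀ v : V, ‖ιW v‖ ≤ C0 * ‖v‖)
    -- Assumption II
    (hII : ∀ v : V, ‖E v‖ ≤ ‖v‖)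
    -- Z-ellipticity of a
    (hell : ∀ v ∈ Xs, (∀ w : M, b v w = 0) → alpha * ‖v‖ ^ 2 ≤ a v v)
    -- error equations (2.28)
    (h10 : ∀ z ∈ Xs, a (u - Ru) z + b z (p - R0p) = ⟪y - yh, E z⟫)
    (h10b : ∀ w : M, b (u - Ru) w = 0)
    (h11 : ∀ z ∈ Xs, a z (φ - Rφ) + b z (R0r - r) = ⟪ιW (u - uh), ιW z⟫)
    (h11b : ∀ w : M, b (φ - Rφ) w = 0)
    -- Theorem 2.6 bound on the control error
    (hybound : ‖y - yh‖ ≤ Cy * (‖E φh - (Submodule.orthogonalProjectionOnto Qh (E φh) : Q)‖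
        + ‖φh - Rφ‖ + ‖Ru - uh‖)) :
    ∃ C > 0,
      ‖u - uh‖ ≤ C * (‖Ru - uh‖
          + ‖E φh - (Submodule.orthogonalProjectionOnto Qh (E φh) : Q)‖ + ‖φh - Rφ‖) ∧
      ‖φ - φh‖ ≤ C * (‖φh - Rφ‖ + ‖Ru - uh‖
          + ‖E φh - (Submodule.orthogonalProjectionOnto Qh (E φh) : Q)‖) := by
  have hstate : alpha * ‖u - Ru‖ ≤ ‖y - yh‖ := by
    refine mul_norm_le_of_elliptic hell (Xs.sub_mem hu hRu) h10b (norm_nonneg _) (p - R0p) ?_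
    rw [h10 _ (Xs.sub_mem hu hRu)]
    exact (real_inner_le_norm _ _).trans (mul_le_mul_of_nonneg_left (hII _) (norm_nonneg _))
  have hadjoint : alpha * ‖φ - Rφ‖ ≤ C0 ^ 2 * ‖u - uh‖ := by
    refine mul_norm_le_of_elliptic hell (Xs.sub_mem hφ hRφ) h11b (by positivity) (R0r - r) ?_
    rw [h11 _ (Xs.sub_mem hφ hRφ)]
    calc ⟪ιW (u - uh), ιW (φ - Rφ)⟫ ≤ ‖ιW (u - uh)‖ * ‖ιW (φ - Rφ)‖ := real_inner_le_norm _ _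
      _ ≤ C0 * ‖u - uh‖ * (C0 * ‖φ - Rφ‖) :=
        mul_le_mul (hI _) (hI _) (norm_nonneg _) ((norm_nonneg _).trans (hI _))
      _ = C0 ^ 2 * ‖u - uh‖ * ‖φ - Rφ‖ := by ring
  obtain ⟨C, hC, hu_bound, hφ_bound⟩ := exists_pos_le_mul_of_coupled_bounds
    (A := ‖Ru - uh‖) (P := ‖E φh - (Submodule.orthogonalProjectionOnto Qh (E φh) : Q)‖)
    (B := ‖φh - Rφ‖) halpha hCy (norm_nonneg _) (norm_nonneg _) (norm_nonneg _)
    (norm_sub_le_norm_sub_add_norm_sub u Ru uh) (hstate.trans (hybound.trans_eq (by ring)))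
    (by simpa only [norm_sub_rev Rφ φh] using norm_sub_le_norm_sub_add_norm_sub φ Rφ φh)
    hadjoint
  exact ⟨C, hC, hu_bound, hφ_bound.trans_eq (by ring)⟩

/-- Theorem 2.7: a posteriori bounds for the state and adjoint state in the
mesh norm.  `V` plays the role of `X + X_h`, `Xs` is the continuous velocity
space, `Ru`, `Rφ` are the reconstructions, and Theorem 2.6 provides the bound
on `‖y − y_h‖_Q` (hypothesis `hybound`). -/
theorem stmt14 {V M W Q : Type*}
    [NormedAddCommGroup V] [NormedSpace ℝ V]
    [AddCommGroup M] [Module ℝ M]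
    [NormedAddCommGroup W] [InnerProductSpace ℝ W]
    [NormedAddCommGroup Q] [InnerProductSpace ℝ Q]
    (Xs : Submodule ℝ V)
    (a : V →ₗ[ℝ] V →ₗ[ℝ] ℝ) (b : V →ₗ[ℝ] M →ₗ[ℝ] ℝ)
    (E : V →ₗ[ℝ] Q) (ιW : V →ₗ[ℝ] W)
    (Qh : Submodule ℝ Q) [Submodule.HasOrthogonalProjection Qh]
    (lam alpha C0 Cy : ℝ)
    (hlam : 0 < lam) (halpha : 0 < alpha) (hC0 : 0 < C0) (hCy : 0 < Cy)
    (u Ru φ Rφ uh φh : V) (p R0p r R0r : M) (y yh : Q)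
    (hu : u ∈ Xs) (hRu : Ru ∈ Xs) (hφ : φ ∈ Xs) (hRφ : Rφ ∈ Xs)
    -- Assumption I
    (hI : ∀ v : V, ‖ιW v‖ ≤ C0 * ‖v‖)
    -- Assumption II
    (hII : ∀ v : V, ‖E v‖ ≤ ‖v‖)
    -- Z-ellipticity of a
    (hell : ∀ v ∈ Xs, (∀ w : M, b v w = 0) → alpha * ‖v‖ ^ 2 ≤ a v v)
    -- error equations (2.28)
    (h10 : ∀ z ∈ Xs, a (u - Ru) z + b z (p - R0p) = ⟪y - yh, E z⟫)
    (h10b : ∀ w : M, b (u - Ru) w = 0)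
    (h11 : ∀ z ∈ Xs, a z (φ - Rφ) + b z (R0r - r) = ⟪ιW (u - uh), ιW z⟫)
    (h11b : ∀ w : M, b (φ - Rφ) w = 0)
    -- Theorem 2.6 bound on the control error
    (hybound : ‖y - yh‖ ≤ Cy * (‖E φh - (Submodule.orthogonalProjectionOnto Qh (E φh) : Q)‖
        + ‖φh - Rφ‖ + ‖Ru - uh‖)) :
    ∃ C > 0,
      ‖u - uh‖ ≤ C * (‖Ru - uh‖
          + ‖E φh - (Submodule.orthogonalProjectionOnto Qh (E φh) : Q)‖ + ‖φh - Rφ‖) ∧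
      ‖φ - φh‖ ≤ C * (‖φh - Rφ‖ + ‖Ru - uh‖
          + ‖E φh - (Submodule.orthogonalProjectionOnto Qh (E φh) : Q)‖) :=
  stmt14_general Xs a b E ιW Qh alpha C0 Cy halpha hCy u Ru φ Rφ uh φh p R0p r R0r y yh hu hRu hφ
    hRφ hI hII hell h10 h10b h11 h11b hybound
end

section
/- In the a posteriori setting with the continuous inf-sup condition for b with constant β > 0: ‖p − p_h‖_M ≤ C(‖R₀p − p_h‖_M + ‖E_h φ_h − Π_h(E_h φ_h)‖_Q + ‖Ru − u_h‖_W + ‖φ_h − R̄φ‖_h). -/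
/-!
The inf-sup condition turns the error equation into a bound for the pressure part of the
reconstruction error: `b z (p - R₀p) = ⟪y - y_h, E z⟫ - a (u - Ru) z` is at most
`(1 + |C₁| C_E) ‖y - y_h‖ ‖z‖` by Assumption II, continuity of `a` and the reconstruction bound,
so `β ‖p - R₀p‖ ≤ (1 + |C₁| C_E) ‖y - y_h‖`. Theorem 2.6 bounds `‖y - y_h‖` by the estimator,
and the triangle inequality through `R₀p` finishes the proof.
-/

open RealInnerProductSpace

theorem iSup_div_norm_le_of_le_mul_norm {V : Type*} [NormedAddCommGroup V] (S : Set V)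
    (f : V → ℝ) {K : ℝ} (hK : 0 ≤ K) (hf : ∀ z ∈ S, f z ≤ K * ‖z‖) :
    ⨆ z : {z : V // z ∈ S ∧ z ≠ 0}, f z.1 / ‖z.1‖ ≤ K :=
  Real.iSup_le (fun ⟨z, hz, hz0⟩ => (div_le_iff₀ (norm_pos_iff.mpr hz0)).mpr (hf z hz)) hK

section ErrorEquation

variable {V M Q : Type*} [NormedAddCommGroup V] [Module ℝ V] [AddCommGroup M] [Module ℝ M]
  [NormedAddCommGroup Q] [InnerProductSpace ℝ Q]
  (a : V →ₗ[ℝ] V →ₗ[ℝ] ℝ) (b : V →ₗ[ℝ] M →ₗ[ℝ] ℝ) (E : V →ₗ[ℝ] Q)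
  {C1 CE : ℝ} {u Ru : V} {q : M} {y yh : Q}

theorem pairing_le_of_error_equation
    (hconta : ∀ v z : V, |a v z| ≤ C1 * ‖v‖ * ‖z‖) (hE : ∀ v : V, ‖E v‖ ≤ ‖v‖)
    (hRubound : ‖Ru - u‖ ≤ CE * ‖y - yh‖) {z : V}
    (herr : a (u - Ru) z + b z q = ⟪y - yh, E z⟫) :
    b z q ≤ (1 + |C1| * CE) * ‖y - yh‖ * ‖z‖ := by
  have ha : |a (u - Ru) z| ≤ |C1| * (CE * ‖y - yh‖) * ‖z‖ :=
    calc |a (u - Ru) z| ≤ C1 * ‖u - Ru‖ * ‖z‖ := hconta _ _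
      _ ≤ |C1| * (CE * ‖y - yh‖) * ‖z‖ := by
        rw [norm_sub_rev]
        gcongr
        exact le_abs_self C1
  have hinner : ⟪y - yh, E z⟫ ≤ ‖y - yh‖ * ‖z‖ :=
    (real_inner_le_norm _ _).trans (by gcongr; exact hE z)
  calc b z q = ⟪y - yh, E z⟫ - a (u - Ru) z := by rw [← herr]; ring
    _ ≤ ‖y - yh‖ * ‖z‖ + |C1| * (CE * ‖y - yh‖) * ‖z‖ := by
      linarith [neg_abs_le (a (u - Ru) z)]
    _ = (1 + |C1| * CE) * ‖y - yh‖ * ‖z‖ := by ring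

end ErrorEquation

theorem mul_norm_le_of_infSup_of_error_equation {V M Q : Type*}
    [NormedAddCommGroup V] [Module ℝ V] [NormedAddCommGroup M] [Module ℝ M]
    [NormedAddCommGroup Q] [InnerProductSpace ℝ Q] (Xs : Submodule ℝ V)
    (a : V →ₗ[ℝ] V →ₗ[ℝ] ℝ) (b : V →ₗ[ℝ] M →ₗ[ℝ] ℝ) (E : V →ₗ[ℝ] Q)
    {beta C1 CE : ℝ} (hCE : 0 ≤ CE) {u Ru : V} {q : M} {y yh : Q}
    (hconta : ∀ v z : V, |a v z| ≤ C1 * ‖v‖ * ‖z‖) (hE : ∀ v : V, ‖E v‖ ≤ ‖v‖)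
    (hinfsup : beta * ‖q‖ ≤ ⨆ z : {z : V // z ∈ Xs ∧ z ≠ 0}, b z.1 q / ‖z.1‖)
    (herr : ∀ z ∈ Xs, a (u - Ru) z + b z q = ⟪y - yh, E z⟫)
    (hRubound : ‖Ru - u‖ ≤ CE * ‖y - yh‖) :
    beta * ‖q‖ ≤ (1 + |C1| * CE) * ‖y - yh‖ :=
  hinfsup.trans <| iSup_div_norm_le_of_le_mul_norm (Xs : Set V) (fun z => b z q) (by positivity)
    fun _ hz => pairing_le_of_error_equation a b E hconta hE hRubound (herr _ hz)

theorem stmt15_general {V M W Q : Type*}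
    [NormedAddCommGroup V] [NormedSpace ℝ V]
    [NormedAddCommGroup M] [NormedSpace ℝ M]
    [NormedAddCommGroup W] [InnerProductSpace ℝ W]
    [NormedAddCommGroup Q] [InnerProductSpace ℝ Q]
    (Xs : Submodule ℝ V)
    (a : V →ₗ[ℝ] V →ₗ[ℝ] ℝ) (b : V →ₗ[ℝ] M →ₗ[ℝ] ℝ)
    (E : V →ₗ[ℝ] Q) (ιW : V →ₗ[ℝ] W)
    (Qh : Submodule ℝ Q) [Qh.HasOrthogonalProjection]
    (beta C1 CE Cy : ℝ)
    (hbeta : 0 < beta) (hCE : 0 < CE) (hCy : 0 < Cy)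
    (u Ru Rφ uh φh : V) (p R0p ph : M) (y yh : Q)
    -- continuity of a
    (hconta : ∀ v z : V, |a v z| ≤ C1 * ‖v‖ * ‖z‖)
    -- Assumption II
    (hII : ∀ v : V, ‖E v‖ ≤ ‖v‖)
    -- continuous inf-sup condition for b with constant beta
    (hinfsup : ∀ q : M,
      beta * ‖q‖ ≤ ⨆ z : {z : V // z ∈ Xs ∧ z ≠ 0}, b z.1 q / ‖z.1‖)
    -- error equation (2.28a)
    (h10 : ∀ z ∈ Xs, a (u - Ru) z + b z (p - R0p) = ⟪y - yh, E z⟫)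
    -- reconstruction bound (2.33)
    (hRubound : ‖Ru - u‖ ≤ CE * ‖y - yh‖)
    -- Theorem 2.6 bound on the control error
    (hybound : ‖y - yh‖ ≤ Cy * (‖E φh - (Qh.orthogonalProjectionOnto (E φh) : Q)‖
        + ‖φh - Rφ‖ + ‖ιW (Ru - uh)‖)) :
    ∃ C > 0, ‖p - ph‖ ≤ C * (‖R0p - ph‖
        + ‖E φh - (Qh.orthogonalProjectionOnto (E φh) : Q)‖
        + ‖ιW (Ru - uh)‖ + ‖φh - Rφ‖) := by
  set η := ‖E φh - (Qh.orthogonalProjectionOnto (E φh) : Q)‖ + ‖φh - Rφ‖ + ‖ιW (Ru - uh)‖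
  set A := (1 + |C1| * CE) * Cy / beta
  have hA : 0 ≤ A := by positivity
  have hη : 0 ≤ η := by positivity
  have hpressure : ‖p - R0p‖ ≤ A * η := by
    rw [div_mul_eq_mul_div, le_div_iff₀ hbeta, mul_comm, mul_assoc]
    exact (mul_norm_le_of_infSup_of_error_equation Xs a b E hCE.le hconta hII (hinfsup _) h10
      hRubound).trans (by gcongr)
  refine ⟨A + 1, by positivity, ?_⟩
  calc ‖p - ph‖ ≤ ‖p - R0p‖ + ‖R0p - ph‖ := norm_sub_le_norm_sub_add_norm_sub _ _ _
    _ ≤ A * η + ‖R0p - ph‖ := by gcongr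
    _ ≤ (A + 1) * (‖R0p - ph‖ + η) := by nlinarith [norm_nonneg (R0p - ph)]
    _ = _ := by ring

/-- Theorem 2.8: a posteriori bound for the pressure, using the continuous
inf-sup condition for `b` with constant `β > 0`, the error equation (2.28a),
the bound `‖Ru − u‖ ≤ C_E ‖y − y_h‖` and the Theorem 2.6 bound on
`‖y − y_h‖_Q`. -/
theorem stmt15 {V M W Q : Type*}
    [NormedAddCommGroup V] [NormedSpace ℝ V]
    [NormedAddCommGroup M] [NormedSpace ℝ M]
    [NormedAddCommGroup W] [InnerProductSpace ℝ W]
    [NormedAddCommGroup Q] [InnerProductSpace ℝ Q]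
    (Xs : Submodule ℝ V)
    (a : V →ₗ[ℝ] V →ₗ[ℝ] ℝ) (b : V →ₗ[ℝ] M →ₗ[ℝ] ℝ)
    (E : V →ₗ[ℝ] Q) (ιW : V →ₗ[ℝ] W)
    (Qh : Submodule ℝ Q) [Qh.HasOrthogonalProjection]
    (beta C1 CE Cy : ℝ)
    (hbeta : 0 < beta) (hCE : 0 < CE) (hCy : 0 < Cy)
    (u Ru φ Rφ uh φh : V) (p R0p ph : M) (y yh : Q)
    (hu : u ∈ Xs) (hRu : Ru ∈ Xs)
    -- continuity of a
    (hconta : ∀ v z : V, |a v z| ≤ C1 * ‖v‖ * ‖z‖)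
    -- Assumption II
    (hII : ∀ v : V, ‖E v‖ ≤ ‖v‖)
    -- continuous inf-sup condition for b with constant beta
    (hinfsup : ∀ q : M,
      beta * ‖q‖ ≤ ⨆ z : {z : V // z ∈ Xs ∧ z ≠ 0}, b z.1 q / ‖z.1‖)
    -- error equation (2.28a)
    (h10 : ∀ z ∈ Xs, a (u - Ru) z + b z (p - R0p) = ⟪y - yh, E z⟫)
    -- reconstruction bound (2.33)
    (hRubound : ‖Ru - u‖ ≤ CE * ‖y - yh‖)
    -- Theorem 2.6 bound on the control error
    (hybound : ‖y - yh‖ ≤ Cy * (‖E φh - (Qh.orthogonalProjectionOnto (E φh) : Q)‖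
        + ‖φh - Rφ‖ + ‖ιW (Ru - uh)‖)) :
    ∃ C > 0, ‖p - ph‖ ≤ C * (‖R0p - ph‖
        + ‖E φh - (Qh.orthogonalProjectionOnto (E φh) : Q)‖
        + ‖ιW (Ru - uh)‖ + ‖φh - Rφ‖) :=
  stmt15_general Xs a b E ιW Qh beta C1 CE Cy hbeta hCE hCy u Ru Rφ uh φh p R0p ph y yh hconta hII
    hinfsup h10 hRubound hybound
end
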